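/- arXiv:1405.1576 — 2 statements merged into one kernel-verified Lean document; each statement's English description precedes it below -/
import Mathlib

section
/- Every tournament on n ≥ 3 vertices has at most (n³−n)/24 cyclic triangles, i.e., at most (n³−n)/24 three-element vertex subsets {x,y,z} with x→y→z→x. -/
open Finset

/-- A tournament on `Fin n`: an orientation of the complete graph, i.e. no loops and
for all distinct `x, y` exactly one of `r x y`, `r y x` holds. -/
def IsTournament {n : ℕ} (r : Fin n → Fin n → Prop) : Prop :=
  (∀ x, ¬ r x x) ∧ ∀ x y : Fin n, x ≠ y → ((r x y ∧ ¬ r y x) ∨ (r y x ∧ ¬ r x y))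

/-- `s` spans a cyclic triangle: `s = {x,y,z}` with `x→y→z→x`. -/
def IsCyclicTriple {n : ℕ} (r : Fin n → Fin n → Prop) (s : Finset (Fin n)) : Prop :=
  ∃ x y z : Fin n, x ≠ y ∧ y ≠ z ∧ x ≠ z ∧ s = {x, y, z} ∧ r x y ∧ r y z ∧ r z x

/-- `s` spans a transitive triple. -/
def IsTransTriple {n : ℕ} (r : Fin n → Fin n → Prop) (s : Finset (Fin n)) : Prop :=
  ∃ x y z : Fin n, x ≠ y ∧ y ≠ z ∧ x ≠ z ∧ s = {x, y, z} ∧ r x y ∧ r y z ∧ r x z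

/-- `s` contains a directed 4-cycle through all of its (four) elements. -/
def HasCycle4 {n : ℕ} (r : Fin n → Fin n → Prop) (s : Finset (Fin n)) : Prop :=
  ∃ a b c d : Fin n, a ≠ b ∧ a ≠ c ∧ a ≠ d ∧ b ≠ c ∧ b ≠ d ∧ c ≠ d ∧
    s = {a, b, c, d} ∧ r a b ∧ r b c ∧ r c d ∧ r d a

/-- `s` spans a transitive 4-vertex subtournament. -/
def IsTrans4 {n : ℕ} (r : Fin n → Fin n → Prop) (s : Finset (Fin n)) : Prop :=
  ∃ a b c d : Fin n, a ≠ b ∧ a ≠ c ∧ a ≠ d ∧ b ≠ c ∧ b ≠ d ∧ c ≠ d ∧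
    s = {a, b, c, d} ∧ r a b ∧ r a c ∧ r a d ∧ r b c ∧ r b d ∧ r c d

open Classical in
/-- `C3(T)`: number of 3-element vertex subsets spanning a cyclic triangle. -/
noncomputable def cyc3Count {n : ℕ} (r : Fin n → Fin n → Prop) : ℕ :=
  ((univ.powersetCard 3).filter (fun s => IsCyclicTriple r s)).card

open Classical in
/-- `T3(T)`: number of 3-element vertex subsets spanning a transitive triple. -/
noncomputable def trans3Count {n : ℕ} (r : Fin n → Fin n → Prop) : ℕ :=
  ((univ.powersetCard 3).filter (fun s => IsTransTriple r s)).card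

open Classical in
/-- `C4(T)`: number of 4-element vertex subsets containing a directed 4-cycle. -/
noncomputable def cyc4Count {n : ℕ} (r : Fin n → Fin n → Prop) : ℕ :=
  ((univ.powersetCard 4).filter (fun s => HasCycle4 r s)).card

open Classical in
/-- `T4(T)`: number of 4-element vertex subsets spanning a transitive subtournament. -/
noncomputable def trans4Count {n : ℕ} (r : Fin n → Fin n → Prop) : ℕ :=
  ((univ.powersetCard 4).filter (fun s => IsTrans4 r s)).card

/-!
Count the directed 2-paths `x → y → z`. Grouped by their middle vertex `v` there are
`∑ v, d⁻(v) d⁺(v)` of them, and `d⁻(v) + d⁺(v) = n - 1` bounds each term by `(n - 1)² / 4`.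
Grouped by their vertex set, a cyclic triangle carries three of them and a transitive triple
one, so there are `3 C₃ + T₃ = 2 C₃ + C(n, 3)`. Hence
`24 C₃ ≤ 3 n (n - 1)² - 2 n (n - 1) (n - 2) = n³ - n`.
-/
open Classical

namespace IsTournament

variable {n : ℕ} {r : Fin n → Fin n → Prop}

theorem irrefl (hT : IsTournament r) (x : Fin n) : ¬ r x x := hT.1 x

theorem ne_of_rel (hT : IsTournament r) {x y : Fin n} (h : r x y) : x ≠ y := by
  rintro rfl
  exact hT.irrefl x h

theorem asymm (hT : IsTournament r) {x y : Fin n} (h : r x y) : ¬ r y x := by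
  rcases hT.2 x y (hT.ne_of_rel h) with ⟨-, h'⟩ | ⟨-, h'⟩
  · exact h'
  · exact absurd h h'

theorem rel_or_rel (hT : IsTournament r) {x y : Fin n} (h : x ≠ y) : r x y ∨ r y x :=
  (hT.2 x y h).imp And.left And.left

end IsTournament

section Neighbors

variable {n : ℕ} (r : Fin n → Fin n → Prop)

noncomputable def inNeighbors (v : Fin n) : Finset (Fin n) := {u | r u v}

noncomputable def outNeighbors (v : Fin n) : Finset (Fin n) := {u | r v u}

variable {r}

theorem IsTournament.card_inNeighbors_add_card_outNeighbors (hT : IsTournament r) (v : Fin n) :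
    #(inNeighbors r v) + #(outNeighbors r v) = n - 1 := by
  have hdisj : Disjoint (inNeighbors r v) (outNeighbors r v) :=
    disjoint_filter.mpr fun _ _ => hT.asymm
  have hunion : inNeighbors r v ∪ outNeighbors r v = univ.erase v := by
    ext u
    simp only [inNeighbors, outNeighbors, mem_union, mem_filter, mem_univ, true_and, mem_erase,
      and_true]
    exact ⟨fun h => h.elim hT.ne_of_rel fun h => (hT.ne_of_rel h).symm, hT.rel_or_rel⟩
  rw [← card_union_of_disjoint hdisj, hunion, card_erase_of_mem (mem_univ v), card_univ,
    Fintype.card_fin]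

end Neighbors

section Triples

variable {n : ℕ} {r : Fin n → Fin n → Prop}

theorem IsCyclicTriple.exists_rel_to {s : Finset (Fin n)} (h : IsCyclicTriple r s) :
    ∀ v ∈ s, ∃ u ∈ s, r u v := by
  obtain ⟨x, y, z, -, -, -, rfl, hxy, hyz, hzx⟩ := h
  simp only [mem_insert, mem_singleton]
  rintro v (rfl | rfl | rfl)
  exacts [⟨z, by simp, hzx⟩, ⟨x, by simp, hxy⟩, ⟨y, by simp, hyz⟩]

theorem IsTournament.not_isCyclicTriple_of_isTransTriple (hT : IsTournament r)
    {s : Finset (Fin n)} (h : IsTransTriple r s) : ¬ IsCyclicTriple r s := by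
  obtain ⟨x, y, z, -, -, -, rfl, hxy, -, hxz⟩ := h
  intro hc
  obtain ⟨u, hu, hux⟩ := hc.exists_rel_to x (by simp)
  simp only [mem_insert, mem_singleton] at hu
  rcases hu with rfl | rfl | rfl
  exacts [hT.irrefl u hux, hT.asymm hxy hux, hT.asymm hxz hux]

theorem IsTournament.isCyclicTriple_or_isTransTriple (hT : IsTournament r)
    {s : Finset (Fin n)} (hs : #s = 3) : IsCyclicTriple r s ∨ IsTransTriple r s := by
  obtain ⟨a, b, c, hab, hac, hbc, rfl⟩ := card_eq_three.mp hs
  have hba := Ne.symm hab; have hca := Ne.symm hac; have hcb := Ne.symm hbc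
  rcases hT.rel_or_rel hab with h1 | h1 <;> rcases hT.rel_or_rel hbc with h2 | h2 <;>
    rcases hT.rel_or_rel hac with h3 | h3
  · exact .inr ⟨a, b, c, hab, hbc, hac, rfl, h1, h2, h3⟩
  · exact .inl ⟨a, b, c, hab, hbc, hac, rfl, h1, h2, h3⟩
  · exact .inr ⟨a, c, b, hac, hcb, hab, by grind, h3, h2, h1⟩
  · exact .inr ⟨c, a, b, hca, hab, hcb, by grind, h3, h1, h2⟩
  · exact .inr ⟨b, a, c, hba, hac, hbc, by grind, h1, h3, h2⟩
  · exact .inr ⟨b, c, a, hbc, hca, hba, by grind, h2, h3, h1⟩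
  · exact .inl ⟨a, c, b, hac, hcb, hab, by grind, h3, h2, h1⟩
  · exact .inr ⟨c, b, a, hcb, hba, hca, by grind, h2, h1, h3⟩

theorem IsTournament.isTransTriple_iff_not_isCyclicTriple (hT : IsTournament r)
    {s : Finset (Fin n)} (hs : #s = 3) : IsTransTriple r s ↔ ¬ IsCyclicTriple r s :=
  ⟨hT.not_isCyclicTriple_of_isTransTriple, (hT.isCyclicTriple_or_isTransTriple hs).resolve_left⟩

theorem IsTournament.filter_not_isCyclicTriple (hT : IsTournament r) :
    {s ∈ (univ : Finset (Fin n)).powersetCard 3 | ¬ IsCyclicTriple r s} =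
      {s ∈ (univ : Finset (Fin n)).powersetCard 3 | IsTransTriple r s} :=
  filter_congr fun _ hs => (hT.isTransTriple_iff_not_isCyclicTriple (mem_powersetCard.mp hs).2).symm

theorem IsTournament.cyc3Count_add_trans3Count (hT : IsTournament r) :
    cyc3Count r + trans3Count r = n.choose 3 := by
  rw [cyc3Count, trans3Count, ← hT.filter_not_isCyclicTriple, card_filter_add_card_filter_not,
    card_powersetCard, card_univ, Fintype.card_fin]

end Triples

section TwoPaths

variable {n : ℕ} (r : Fin n → Fin n → Prop)

noncomputable def twoPaths : Finset (Fin n × Fin n × Fin n) := {p | r p.1 p.2.1 ∧ r p.2.1 p.2.2}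

variable {r}

theorem card_twoPaths_eq_sum :
    #(twoPaths r) = ∑ v, #(inNeighbors r v) * #(outNeighbors r v) := by
  rw [card_eq_sum_card_fiberwise (f := fun p => p.2.1) (t := univ) fun _ _ => mem_univ _]
  refine sum_congr rfl fun v _ => ?_
  have hfiber : {p ∈ twoPaths r | p.2.1 = v} = inNeighbors r v ×ˢ ({v} ×ˢ outNeighbors r v) := by
    ext ⟨a, b, c⟩
    simp only [twoPaths, inNeighbors, outNeighbors, mem_filter, mem_univ, true_and, mem_product,
      mem_singleton]
    constructor
    · rintro ⟨⟨hab, hbc⟩, rfl⟩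
      exact ⟨hab, rfl, hbc⟩
    · rintro ⟨hab, rfl, hbc⟩
      exact ⟨⟨hab, hbc⟩, rfl⟩
  rw [hfiber, card_product, card_product, card_singleton, one_mul]

theorem IsTournament.four_mul_card_twoPaths_le (hT : IsTournament r) :
    4 * #(twoPaths r) ≤ n * (n - 1) ^ 2 := by
  rw [card_twoPaths_eq_sum, mul_sum]
  calc ∑ v, 4 * (#(inNeighbors r v) * #(outNeighbors r v))
      ≤ ∑ _v : Fin n, (n - 1) ^ 2 := sum_le_sum fun v _ => by
        rw [← hT.card_inNeighbors_add_card_outNeighbors v, ← mul_assoc]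
        exact four_mul_le_sq_add _ _
    _ = n * (n - 1) ^ 2 := by simp

def vertexSet {α : Type*} [DecidableEq α] (p : α × α × α) : Finset α := {p.1, p.2.1, p.2.2}

theorem IsTournament.card_vertexSet_of_mem_twoPaths (hT : IsTournament r)
    {p : Fin n × Fin n × Fin n} (hp : p ∈ twoPaths r) : #(vertexSet p) = 3 := by
  obtain ⟨hab, hbc⟩ := (mem_filter.mp hp).2
  have hac : p.1 ≠ p.2.2 := fun h => hT.asymm hab (h ▸ hbc)
  rw [vertexSet, card_eq_three]
  exact ⟨_, _, _, hT.ne_of_rel hab, hac, hT.ne_of_rel hbc, rfl⟩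

theorem mem_of_vertexSet_eq {α : Type*} [DecidableEq α] {a b c x y z : α}
    (h : vertexSet (a, b, c) = {x, y, z}) :
    (a = x ∨ a = y ∨ a = z) ∧ (b = x ∨ b = y ∨ b = z) ∧ (c = x ∨ c = y ∨ c = z) := by
  have hmem : ∀ v ∈ vertexSet (a, b, c), v = x ∨ v = y ∨ v = z := fun v hv => by
    rw [h] at hv
    simpa using hv
  exact ⟨hmem a (by simp [vertexSet]), hmem b (by simp [vertexSet]), hmem c (by simp [vertexSet])⟩

theorem IsTournament.filter_twoPaths_vertexSet_eq_of_cyclic (hT : IsTournament r)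
    {x y z : Fin n} (hxy : r x y) (hyz : r y z) (hzx : r z x) :
    {p ∈ twoPaths r | vertexSet p = {x, y, z}} = {(x, y, z), (y, z, x), (z, x, y)} := by
  have := hT.irrefl x; have := hT.irrefl y; have := hT.irrefl z
  have := hT.asymm hxy; have := hT.asymm hyz; have := hT.asymm hzx
  ext ⟨a, b, c⟩
  simp only [twoPaths, mem_filter, mem_univ, true_and, mem_insert, mem_singleton, Prod.mk.injEq]
  constructor
  · rintro ⟨⟨hab, hbc⟩, hs⟩
    obtain ⟨ha, hb, hc⟩ := mem_of_vertexSet_eq hs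
    rcases ha with rfl | rfl | rfl <;> rcases hb with rfl | rfl | rfl <;>
      rcases hc with rfl | rfl | rfl <;> simp_all
  · rintro (⟨rfl, rfl, rfl⟩ | ⟨rfl, rfl, rfl⟩ | ⟨rfl, rfl, rfl⟩) <;>
      exact ⟨by simp_all, by grind [vertexSet]⟩

theorem IsTournament.filter_twoPaths_vertexSet_eq_of_trans (hT : IsTournament r)
    {x y z : Fin n} (hxy : r x y) (hyz : r y z) (hxz : r x z) :
    {p ∈ twoPaths r | vertexSet p = {x, y, z}} = {(x, y, z)} := by
  have := hT.irrefl x; have := hT.irrefl y; have := hT.irrefl z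
  have := hT.asymm hxy; have := hT.asymm hyz; have := hT.asymm hxz
  ext ⟨a, b, c⟩
  simp only [twoPaths, mem_filter, mem_univ, true_and, mem_singleton, Prod.mk.injEq]
  constructor
  · rintro ⟨⟨hab, hbc⟩, hs⟩
    obtain ⟨ha, hb, hc⟩ := mem_of_vertexSet_eq hs
    rcases ha with rfl | rfl | rfl <;> rcases hb with rfl | rfl | rfl <;>
      rcases hc with rfl | rfl | rfl <;> simp_all
  · rintro ⟨rfl, rfl, rfl⟩
    exact ⟨⟨hxy, hyz⟩, rfl⟩

theorem IsTournament.card_twoPaths (hT : IsTournament r) :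
    #(twoPaths r) = 3 * cyc3Count r + trans3Count r := by
  rw [card_eq_sum_card_fiberwise (f := vertexSet) (t := (univ : Finset (Fin n)).powersetCard 3)
      fun p hp => mem_powersetCard.mpr ⟨subset_univ _, hT.card_vertexSet_of_mem_twoPaths hp⟩,
    ← sum_filter_add_sum_filter_not _ (IsCyclicTriple r), hT.filter_not_isCyclicTriple]
  have hcyc : ∀ s ∈ {s ∈ (univ : Finset (Fin n)).powersetCard 3 | IsCyclicTriple r s},
      #{p ∈ twoPaths r | vertexSet p = s} = 3 := by
    intro s hs
    obtain ⟨x, y, z, hxy, hyz, hxz, rfl, h1, h2, h3⟩ := (mem_filter.mp hs).2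
    rw [hT.filter_twoPaths_vertexSet_eq_of_cyclic h1 h2 h3, card_eq_three]
    exact ⟨_, _, _, by simp [hxy], by simp [hxz], by simp [hyz], rfl⟩
  have htrans : ∀ s ∈ {s ∈ (univ : Finset (Fin n)).powersetCard 3 | IsTransTriple r s},
      #{p ∈ twoPaths r | vertexSet p = s} = 1 := by
    intro s hs
    obtain ⟨x, y, z, -, -, -, rfl, h1, h2, h3⟩ := (mem_filter.mp hs).2
    rw [hT.filter_twoPaths_vertexSet_eq_of_trans h1 h2 h3, card_singleton]
  rw [sum_const_nat hcyc, sum_const_nat htrans, cyc3Count, trans3Count, mul_comm, mul_one]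

end TwoPaths

theorem twentyFour_mul_le_cube_sub_self {n c t : ℕ} (hsum : c + t = n.choose 3)
    (hpaths : 4 * (3 * c + t) ≤ n * (n - 1) ^ 2) : 24 * c ≤ n ^ 3 - n := by
  obtain _ | _ | _ | k := n
  · simp_all
  · simp_all
  · simp_all
  · have hchoose : 6 * (k + 3).choose 3 = (k + 3) * (k + 2) * (k + 1) := by
      have := Nat.descFactorial_eq_factorial_mul_choose (k + 3) 3
      simp [Nat.descFactorial_succ, Nat.factorial] at this
      linarith
    simp only [Nat.add_sub_cancel] at hpaths
    apply Nat.le_sub_of_add_le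
    nlinarith

theorem stmt_4_general {n : ℕ} (r : Fin n → Fin n → Prop) (hT : IsTournament r) :
    24 * cyc3Count r ≤ n ^ 3 - n := by
  refine twentyFour_mul_le_cube_sub_self hT.cyc3Count_add_trans3Count ?_
  rw [← hT.card_twoPaths]
  exact hT.four_mul_card_twoPaths_le

/-- every tournament on `n ≥ 3` vertices has at most `(n³ − n)/24`
cyclic triangles. -/
theorem stmt_4 {n : ℕ} (hn : 3 ≤ n) (r : Fin n → Fin n → Prop) (hT : IsTournament r) :
    24 * cyc3Count r ≤ n ^ 3 - n :=
  stmt_4_general r hT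
end

section
/- Let T be a tournament on n ≥ 4 vertices, C3(T) the number of 3-element vertex subsets spanning a cyclic triangle, and C4(T) the number of 4-element vertex subsets whose induced subtournament contains a directed 4-cycle. Then 9·C3(T)² ≤ C(n,2)·(3·C3(T) + 2·C4(T)). -/
open Finset

/-! Let `d e` be the number of cyclic triangles through the edge `e`. Then `∑ d = 3·C3`, and
`∑ d²` counts ordered pairs of cyclic triangles with a common edge: the `3·C3` diagonal ones and
the ordered pairs of distinct cyclic triangles sharing an edge. Two such triangles `p→q→a→p`,
`p→q→b→p` span a 4-set carrying the directed 4-cycle `q→a→b→p` or `q→b→a→p`, and this 4-set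
holds no third cyclic triangle (`q` beats both `a` and `b`, `p` loses to both), so every such
4-set comes from at most two ordered pairs and `∑ d² ≤ 3·C3 + 2·C4`. Cauchy–Schwarz over the
`C(n,2)` edges finishes the proof. -/

section DoubleCounting

variable {α ι : Type*} [DecidableEq α]

theorem sum_card_filter_subset [Fintype α] (S : Finset ι) (f : ι → Finset α) (k : ℕ) :
    ∑ e ∈ powersetCard k univ, #{i ∈ S | e ⊆ f i} = ∑ i ∈ S, (#(f i)).choose k := by
  refine (sum_card_bipartiteAbove_eq_sum_card_bipartiteBelow (fun e i => e ⊆ f i)).trans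
    (sum_congr rfl fun i _ => ?_)
  have : (powersetCard k univ).bipartiteBelow (fun e i => e ⊆ f i) i = powersetCard k (f i) := by
    ext e
    simp [bipartiteBelow, mem_powersetCard, and_comm]
  rw [this, card_powersetCard]

theorem sum_sq_card_filter_subset [Fintype α] (𝒜 : Finset (Finset α)) (k : ℕ) :
    ∑ e ∈ powersetCard k univ, #{s ∈ 𝒜 | e ⊆ s} ^ 2 =
      ∑ p ∈ 𝒜 ×ˢ 𝒜, (#(p.1 ∩ p.2)).choose k := by
  rw [← sum_card_filter_subset]
  refine sum_congr rfl fun e _ => ?_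
  rw [sq, ← card_product, ← filter_product]
  simp_rw [subset_inter_iff]

theorem sum_choose_card_inter_product {𝒜 : Finset (Finset α)} {k : ℕ}
    (h𝒜 : ∀ s ∈ 𝒜, #s = k + 1) :
    ∑ p ∈ 𝒜 ×ˢ 𝒜, (#(p.1 ∩ p.2)).choose k =
      (k + 1) * #𝒜 + #{p ∈ 𝒜.offDiag | #(p.1 ∩ p.2) = k} := by
  rw [← diag_union_offDiag, sum_union (disjoint_diag_offDiag _), diag, sum_map, card_filter]
  congr 1
  · simp_rw [Function.Embedding.coeFn_mk, Function.diag, inter_self]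
    rw [sum_congr rfl fun s hs => by rw [h𝒜 s hs, Nat.choose_succ_self_right], sum_const,
      smul_eq_mul, mul_comm]
  · refine sum_congr rfl fun p hp => ?_
    obtain ⟨h1, h2, hne⟩ := mem_offDiag.1 hp
    have hlt : #(p.1 ∩ p.2) < k + 1 := by
      refine h𝒜 _ h1 ▸ card_lt_card (inter_subset_left.ssubset_of_ne fun h => hne ?_)
      exact eq_of_subset_of_card_le (inter_eq_left.1 h) (by rw [h𝒜 _ h1, h𝒜 _ h2])
    split_ifs with h
    · rw [h, Nat.choose_self]
    · exact Nat.choose_eq_zero_of_lt (by omega)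

end DoubleCounting

section Tournament

variable {n : ℕ} {r : Fin n → Fin n → Prop}

theorem IsTournament.asymm_s7 (hT : IsTournament r) {a b : Fin n} (h : r a b) : ¬ r b a := by
  rcases eq_or_ne a b with rfl | hab
  · exact absurd h (hT.1 a)
  · rcases hT.2 a b hab with ⟨_, h'⟩ | ⟨_, h'⟩
    · exact h'
    · exact absurd h h'

theorem IsCyclicTriple.card_eq {s : Finset (Fin n)} (hs : IsCyclicTriple r s) : #s = 3 := by
  obtain ⟨x, y, z, hxy, hyz, hxz, rfl, -⟩ := hs
  exact card_eq_three.2 ⟨x, y, z, hxy, hxz, hyz, rfl⟩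

theorem HasCycle4.card_eq {s : Finset (Fin n)} (hs : HasCycle4 r s) : #s = 4 := by
  obtain ⟨a, b, c, d, hab, hac, had, hbc, hbd, hcd, rfl, -⟩ := hs
  exact card_eq_four.2 ⟨a, b, c, d, hab, hac, had, hbc, hbd, hcd, rfl⟩

theorem IsCyclicTriple.exists_eq_insert (hT : IsTournament r) {s : Finset (Fin n)}
    (hs : IsCyclicTriple r s) {u v : Fin n} (hu : u ∈ s) (hv : v ∈ s) (huv : r u v) :
    ∃ w, w ≠ u ∧ w ≠ v ∧ s = {u, v, w} ∧ r v w ∧ r w u := by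
  obtain ⟨x, y, z, hxy, hyz, hxz, rfl, rxy, ryz, rzx⟩ := hs
  simp only [mem_insert, mem_singleton] at hu hv
  rcases hu with rfl | rfl | rfl <;> rcases hv with rfl | rfl | rfl <;>
    try first | exact absurd huv (hT.1 _) | exact absurd huv (hT.asymm_s7 ‹_›)
  · exact ⟨z, hxz.symm, hyz.symm, rfl, ryz, rzx⟩
  · exact ⟨x, hxy, hxz, by grind, rzx, rxy⟩
  · exact ⟨y, hyz, hxy.symm, by grind, rxy, ryz⟩

theorem not_isCyclicTriple_of_source (hT : IsTournament r) {x y z : Fin n}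
    (hy : r x y) (hz : r x z) : ¬ IsCyclicTriple r {x, y, z} := fun hs => by
  obtain ⟨w, hwx, hwy, hw, -, hwx'⟩ := hs.exists_eq_insert hT (by simp) (by simp) hy
  have : w = z := by
    have : w ∈ ({x, y, z} : Finset (Fin n)) := by rw [hw]; simp
    simpa [hwx, hwy] using this
  exact hT.asymm_s7 hz (this ▸ hwx')

theorem not_isCyclicTriple_of_sink (hT : IsTournament r) {x y z : Fin n}
    (hy : r y x) (hz : r z x) : ¬ IsCyclicTriple r {x, y, z} := fun hs => by
  obtain ⟨w, hwy, hwx, hw, hxw, -⟩ := hs.exists_eq_insert hT (by simp) (by simp) hy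
  have : w = z := by
    have : w ∈ ({x, y, z} : Finset (Fin n)) := by rw [hw]; simp
    simpa [hwx, hwy] using this
  exact hT.asymm_s7 hz (this ▸ hxw)

theorem IsCyclicTriple.exists_of_card_inter_eq_two (hT : IsTournament r)
    {s t : Finset (Fin n)} (hs : IsCyclicTriple r s) (ht : IsCyclicTriple r t) (hst : s ≠ t)
    (h2 : #(s ∩ t) = 2) :
    ∃ p q a b, a ≠ b ∧ s = {p, q, a} ∧ t = {p, q, b} ∧
      r p q ∧ r q a ∧ r a p ∧ r q b ∧ r b p := by
  obtain ⟨x, y, hxy, hI⟩ := card_eq_two.1 h2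
  wlog hr : r x y generalizing x y
  · exact this y x hxy.symm (by rw [hI, pair_comm]) ((hT.2 x y hxy).resolve_left (by tauto)).1
  have hx : x ∈ s ∩ t := by simp [hI]
  have hy : y ∈ s ∩ t := by simp [hI]
  rw [mem_inter] at hx hy
  obtain ⟨a, -, -, rfl, hya, hax⟩ := hs.exists_eq_insert hT hx.1 hy.1 hr
  obtain ⟨b, -, -, rfl, hyb, hbx⟩ := ht.exists_eq_insert hT hx.2 hy.2 hr
  exact ⟨x, y, a, b, by rintro rfl; exact hst rfl, rfl, rfl, hr, hya, hax, hyb, hbx⟩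

theorem IsCyclicTriple.hasCycle4_union (hT : IsTournament r) {s t : Finset (Fin n)}
    (hs : IsCyclicTriple r s) (ht : IsCyclicTriple r t) (hst : s ≠ t) (h2 : #(s ∩ t) = 2) :
    HasCycle4 r (s ∪ t) := by
  obtain ⟨p, q, a, b, hab, rfl, rfl, hpq, hqa, hap, hqb, hbp⟩ :=
    hs.exists_of_card_inter_eq_two hT ht hst h2
  have hne {u v : Fin n} (h : r u v) : u ≠ v := fun e => hT.1 u (e ▸ h)
  rcases hT.2 a b hab with ⟨hab', -⟩ | ⟨hba, -⟩
  · exact ⟨q, a, b, p, hne hqa, hne hqb, (hne hpq).symm, hab, hne hap, hne hbp,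
      by ext; simp only [mem_union, mem_insert, mem_singleton]; tauto, hqa, hab', hbp, hpq⟩
  · exact ⟨q, b, a, p, hne hqb, hne hqa, (hne hpq).symm, hab.symm, hne hbp, hne hap,
      by ext; simp only [mem_union, mem_insert, mem_singleton]; tauto, hqb, hba, hap, hpq⟩

theorem IsCyclicTriple.eq_or_eq_of_subset_union (hT : IsTournament r) {s t u : Finset (Fin n)}
    (hs : IsCyclicTriple r s) (ht : IsCyclicTriple r t) (hst : s ≠ t) (h2 : #(s ∩ t) = 2)
    (hu : IsCyclicTriple r u) (hsub : u ⊆ s ∪ t) : u = s ∨ u = t := by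
  obtain ⟨p, q, a, b, hab, rfl, rfl, hpq, hqa, hap, hqb, hbp⟩ :=
    hs.exists_of_card_inter_eq_two hT ht hst h2
  have hp : p ∈ u := by
    by_contra hp
    have : u = {q, a, b} := eq_of_subset_of_card_le
      (fun x hx => by grind [hsub hx]) (hu.card_eq ▸ card_le_three)
    exact not_isCyclicTriple_of_source hT hqa hqb (this ▸ hu)
  have hq : q ∈ u := by
    by_contra hq
    have : u = {p, a, b} := eq_of_subset_of_card_le
      (fun x hx => by grind [hsub hx]) (hu.card_eq ▸ card_le_three)
    exact not_isCyclicTriple_of_sink hT hap hbp (this ▸ hu)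
  obtain ⟨w, hwp, hwq, rfl, -⟩ := hu.exists_eq_insert hT hp hq hpq
  have hw : w ∈ ({p, q, a} ∪ {p, q, b} : Finset (Fin n)) := hsub (by simp)
  simp only [mem_union, mem_insert, mem_singleton, hwp, hwq, false_or] at hw
  rcases hw with rfl | rfl
  · exact .inl rfl
  · exact .inr rfl

theorem IsCyclicTriple.eq_or_swap_of_union_eq (hT : IsTournament r)
    {s t s' t' : Finset (Fin n)} (hs : IsCyclicTriple r s) (ht : IsCyclicTriple r t)
    (hst : s ≠ t) (h2 : #(s ∩ t) = 2) (hs' : IsCyclicTriple r s') (ht' : IsCyclicTriple r t')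
    (hst' : s' ≠ t') (hu : s' ∪ t' = s ∪ t) : (s', t') = (s, t) ∨ (s', t') = (t, s) := by
  rcases hs.eq_or_eq_of_subset_union hT ht hst h2 hs' (hu ▸ subset_union_left) with rfl | rfl <;>
  rcases hs.eq_or_eq_of_subset_union hT ht hst h2 ht' (hu ▸ subset_union_right) with rfl | rfl <;>
  simp_all

open Classical in
noncomputable def cyclicTriples (r : Fin n → Fin n → Prop) : Finset (Finset (Fin n)) :=
  (univ.powersetCard 3).filter (fun s => IsCyclicTriple r s)

theorem cyc3Count_eq_card_cyclicTriples : cyc3Count r = #(cyclicTriples r) := rfl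

theorem mem_cyclicTriples {s : Finset (Fin n)} : s ∈ cyclicTriples r ↔ IsCyclicTriple r s := by
  simpa [cyclicTriples, mem_powersetCard] using IsCyclicTriple.card_eq

theorem IsTournament.card_filter_card_inter_eq_two_le (hT : IsTournament r) :
    #{p ∈ (cyclicTriples r).offDiag | #(p.1 ∩ p.2) = 2} ≤ 2 * cyc4Count r := by
  classical
  refine card_le_mul_card_image_of_maps_to (f := fun p => p.1 ∪ p.2) (fun p hp => ?_) 2
    fun u _ => ?_
  · simp only [mem_filter, mem_offDiag, mem_cyclicTriples] at hp
    obtain ⟨⟨hs, ht, hst⟩, h2⟩ := hp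
    have h4 := hs.hasCycle4_union hT ht hst h2
    simpa [mem_powersetCard] using ⟨h4.card_eq, h4⟩
  · set Q := {p ∈ (cyclicTriples r).offDiag | #(p.1 ∩ p.2) = 2}
    have mem_Q {p} : p ∈ Q ↔ IsCyclicTriple r p.1 ∧ IsCyclicTriple r p.2 ∧ p.1 ≠ p.2 ∧
        #(p.1 ∩ p.2) = 2 := by
      simp [Q, mem_cyclicTriples, and_assoc]
    rcases {p ∈ Q | p.1 ∪ p.2 = u}.eq_empty_or_nonempty with h | ⟨⟨s, t⟩, hst⟩
    · simp [h]
    simp only [mem_filter, mem_Q] at hst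
    obtain ⟨⟨hs, ht, hne, h2⟩, rfl⟩ := hst
    refine (card_le_card (t := {(s, t), (t, s)}) fun p hp => ?_).trans card_le_two
    simp only [mem_filter, mem_Q] at hp
    obtain ⟨⟨hs', ht', hne', -⟩, hu⟩ := hp
    simpa using hs.eq_or_swap_of_union_eq hT ht hne h2 hs' ht' hne' hu

end Tournament

theorem stmt_7_general {n : ℕ} (r : Fin n → Fin n → Prop) (hT : IsTournament r) :
    9 * cyc3Count r ^ 2 ≤ n.choose 2 * (3 * cyc3Count r + 2 * cyc4Count r) := by
  set 𝒯 := cyclicTriples r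
  have h𝒯 : ∀ s ∈ 𝒯, #s = 2 + 1 := fun s hs => (mem_cyclicTriples.1 hs).card_eq
  have hsum : ∑ e ∈ powersetCard 2 univ, #{s ∈ 𝒯 | e ⊆ s} = 3 * cyc3Count r := by
    refine (sum_card_filter_subset 𝒯 id 2).trans ?_
    rw [sum_congr rfl fun s hs => by rw [id, h𝒯 s hs, Nat.choose_succ_self_right], sum_const,
      smul_eq_mul, cyc3Count_eq_card_cyclicTriples, mul_comm]
  calc 9 * cyc3Count r ^ 2 = (∑ e ∈ powersetCard 2 univ, #{s ∈ 𝒯 | e ⊆ s}) ^ 2 := by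
        rw [hsum]; ring
    _ ≤ #(powersetCard 2 (univ : Finset (Fin n))) *
          ∑ e ∈ powersetCard 2 univ, #{s ∈ 𝒯 | e ⊆ s} ^ 2 := sq_sum_le_card_mul_sum_sq
    _ ≤ n.choose 2 * (3 * cyc3Count r + 2 * cyc4Count r) := by
        rw [card_powersetCard, card_univ, Fintype.card_fin, sum_sq_card_filter_subset,
          sum_choose_card_inter_product h𝒯, ← cyc3Count_eq_card_cyclicTriples]
        gcongr
        exact hT.card_filter_card_inter_eq_two_le

/-- `9·C3(T)² ≤ C(n,2)·(3·C3(T) + 2·C4(T))`. -/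
theorem stmt_7 {n : ℕ} (hn : 4 ≤ n) (r : Fin n → Fin n → Prop) (hT : IsTournament r) :
    9 * cyc3Count r ^ 2 ≤ n.choose 2 * (3 * cyc3Count r + 2 * cyc4Count r) :=
  stmt_7_general r hT
end
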